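/- arXiv:1710.10864 — 3 statements merged into one kernel-verified Lean document; each statement's English description precedes it below -/
import Mathlib

section
/- For any positive semidefinite symmetric real matrices P and Q of size r, and any nonnegative integers m and n, one has 0 ≤ Tr((PQ)^{n+m}) ≤ Tr((PQ)^m) · Tr((PQ)^n). -/
/-!
Write `Q = Bᴴ B`. Cycling the trace turns `Tr((PQ)^k)` into `Tr(M^k)` for the positive
semidefinite matrix `M = B P Bᴴ`, i.e. into `∑ᵢ λᵢ^k` with eigenvalues `λᵢ ≥ 0`. For nonnegative
families `∑ᵢ aᵢ bᵢ ≤ (∑ᵢ aᵢ)(∑ᵢ bᵢ)`, which with `aᵢ = λᵢ^n`, `bᵢ = λᵢ^m` is the bound.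
-/

open Matrix
open scoped ComplexOrder

theorem Finset.sum_mul_le_sum_mul_sum {ι R : Type*} [CommSemiring R] [PartialOrder R]
    [IsOrderedRing R] (s : Finset ι) {f g : ι → R} (hf : ∀ i ∈ s, 0 ≤ f i)
    (hg : ∀ i ∈ s, 0 ≤ g i) :
    ∑ i ∈ s, f i * g i ≤ (∑ i ∈ s, f i) * ∑ i ∈ s, g i := by
  rw [Finset.sum_mul]
  exact Finset.sum_le_sum fun i hi =>
    mul_le_mul_of_nonneg_left (Finset.single_le_sum hg hi) (hf i hi)

namespace Matrix

variable {n R 𝕜 : Type*} [Fintype n] [DecidableEq n]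

theorem trace_pow_mul_comm [CommSemiring R] (A B : Matrix n n R) (k : ℕ) :
    ((A * B) ^ k).trace = ((B * A) ^ k).trace := by
  cases k with
  | zero => rfl
  | succ k =>
    rw [pow_succ, ← Matrix.mul_assoc, mul_pow_mul, Matrix.mul_assoc, trace_mul_comm,
      Matrix.mul_assoc, ← pow_succ]

variable [RCLike 𝕜] {A : Matrix n n 𝕜}

theorem IsHermitian.trace_cfc (hA : A.IsHermitian) (f : ℝ → ℝ) :
    (cfc f A).trace = ∑ i, (f (hA.eigenvalues i) : 𝕜) := by
  rw [hA.cfc_eq, IsHermitian.cfc, Unitary.conjStarAlgAut_apply, trace_mul_cycle,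
    Unitary.coe_star_mul_self, Matrix.one_mul, trace_diagonal]
  rfl

theorem IsHermitian.trace_pow (hA : A.IsHermitian) (k : ℕ) :
    (A ^ k).trace = ∑ i, (hA.eigenvalues i ^ k : 𝕜) := by
  rw [← cfc_pow_id (R := ℝ) A k hA.isSelfAdjoint, hA.trace_cfc]
  push_cast
  rfl

open scoped MatrixOrder in
theorem PosSemidef.exists_posSemidef_trace_pow_mul_eq {P Q : Matrix n n 𝕜} (hP : P.PosSemidef)
    (hQ : Q.PosSemidef) :
    ∃ M : Matrix n n 𝕜, M.PosSemidef ∧ ∀ k : ℕ, ((P * Q) ^ k).trace = (M ^ k).trace := by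
  obtain ⟨B, rfl⟩ := CStarAlgebra.nonneg_iff_eq_star_mul_self.mp hQ.nonneg
  refine ⟨B * P * Bᴴ, hP.mul_mul_conjTranspose_same B, fun k => ?_⟩
  rw [← Matrix.mul_assoc, trace_pow_mul_comm, Matrix.mul_assoc, star_eq_conjTranspose]

end Matrix

theorem wishart_trace_product_bound {r : ℕ} (P Q : Matrix (Fin r) (Fin r) ℝ)
    (hP : P.PosSemidef) (hQ : Q.PosSemidef) (m n : ℕ) :
    0 ≤ ((P * Q) ^ (n + m)).trace ∧
      ((P * Q) ^ (n + m)).trace ≤ ((P * Q) ^ m).trace * ((P * Q) ^ n).trace := by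
  obtain ⟨M, hM, htrace⟩ := hP.exists_posSemidef_trace_pow_mul_eq hQ
  have heig := hM.eigenvalues_nonneg
  simp only [htrace, hM.isHermitian.trace_pow, RCLike.ofReal_real_eq_id, id_eq]
  refine ⟨Finset.sum_nonneg fun i _ => pow_nonneg (heig i) _, ?_⟩
  simp only [pow_add]
  exact Finset.sum_mul_le_sum_mul_sum _ (fun i _ => pow_nonneg (heig i) n)
    (fun i _ => pow_nonneg (heig i) m) |>.trans_eq (mul_comm _ _)
end

section
/- Let X₁, X₂ be independent centered Gaussian vectors in ℝ^r with common covariance P, and set 𝕏ᵢ = XᵢXᵢ'. Then E((𝕏₁−P)(𝕏₂−P)(𝕏₁−P)(𝕏₂−P)) = 3P⁴ + Tr(P²)·P². -/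
/-!
Write `A = XXᵀ - P`. By independence, each entry of `E[A₁A₂A₁A₂]` is a sum over inner indices of
products `E[(A₁)ᵢₖ(A₁)ₗₘ] · E[(A₂)ₖₗ(A₂)ₘⱼ]`, and by Isserlis' theorem
`E[(XᵢXₖ - Pᵢₖ)(XₗXₘ - Pₗₘ)] = PᵢₗPₖₘ + PᵢₘPₖₗ`. Multiplying out the two pairings gives four
index contractions of `P`: one of them closes a loop and contributes `Tr(P²)·P²`, the other three
are chains and each contributes `P⁴`.

Isserlis' theorem follows by polarization from the fact that every projection `⟨u, X⟩` is
`N(0, uᵀPu)`, whose fourth moment is `3 (uᵀPu)²`; the moments of `N(0, v)` are the derivatives at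
`0` of its moment generating function `exp (v t² / 2)`.
-/

open MeasureTheory ProbabilityTheory Matrix
open scoped NNReal

section GaussianMoments

open Polynomial Real

lemma iteratedDeriv_exp_half_mul_sq (v : ℝ) (n : ℕ) :
    iteratedDeriv n (fun t => exp (v * t ^ 2 / 2)) =
      fun t => ((fun p => derivative p + C v * X * p)^[n] 1).eval t * exp (v * t ^ 2 / 2) := by
  induction n with
  | zero => simp
  | succ n ih =>
    rw [iteratedDeriv_succ, ih, Function.iterate_succ_apply']
    funext t
    have hexp : HasDerivAt (fun t => exp (v * t ^ 2 / 2)) (exp (v * t ^ 2 / 2) * (v * t)) t := by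
      convert (((hasDerivAt_pow 2 t).const_mul v).div_const 2).exp using 1
      ring
    refine ((Polynomial.hasDerivAt _ t).mul hexp).deriv.trans ?_
    simp only [eval_add, eval_mul, eval_C, eval_X]
    ring

lemma integral_pow_gaussianReal_eq_iteratedDeriv (v : ℝ≥0) (n : ℕ) :
    ∫ x, x ^ n ∂gaussianReal 0 v = iteratedDeriv n (fun t => exp (v * t ^ 2 / 2)) 0 := by
  have h := iteratedDeriv_mgf_zero (X := id) (μ := gaussianReal 0 v)
    (by simp [integrableExpSet_id_gaussianReal]) n
  simp only [mgf_id_gaussianReal, zero_mul, zero_add] at h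
  exact h.symm

lemma integral_sq_gaussianReal (v : ℝ≥0) : ∫ x, x ^ 2 ∂gaussianReal 0 v = v := by
  rw [integral_pow_gaussianReal_eq_iteratedDeriv, iteratedDeriv_exp_half_mul_sq]
  simp

lemma integral_pow_four_gaussianReal (v : ℝ≥0) : ∫ x, x ^ 4 ∂gaussianReal 0 v = 3 * v ^ 2 := by
  rw [integral_pow_gaussianReal_eq_iteratedDeriv, iteratedDeriv_exp_half_mul_sq]
  simp only [Function.iterate_succ_apply', Function.iterate_zero_apply, derivative_add,
    derivative_mul, derivative_C, derivative_X, derivative_one, derivative_zero, eval_add,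
    eval_mul, eval_C, eval_X, eval_one, eval_zero, pow_two, mul_zero, zero_div, exp_zero]
  ring

end GaussianMoments

section GaussianLaw

variable {Ω : Type*} [MeasurableSpace Ω] {μ : Measure Ω} {Y : Ω → ℝ} {m : ℝ} {v : ℝ≥0}

lemma aemeasurable_of_map_eq_gaussianReal (hY : μ.map Y = gaussianReal m v) :
    AEMeasurable Y μ :=
  .of_map_ne_zero (by rw [hY]; exact IsProbabilityMeasure.ne_zero _)

lemma integrable_pow_of_map_eq_gaussianReal (hY : μ.map Y = gaussianReal m v) (n : ℕ) :
    Integrable (fun ω => Y ω ^ n) μ := by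
  have h : Integrable (fun x : ℝ => x ^ n) (gaussianReal m v) :=
    integrable_pow_of_mem_interior_integrableExpSet (X := id)
      (by simp [integrableExpSet_id_gaussianReal]) n
  rw [← hY] at h
  exact h.comp_aemeasurable (aemeasurable_of_map_eq_gaussianReal hY)

lemma integral_pow_of_map_eq_gaussianReal (hY : μ.map Y = gaussianReal m v) (n : ℕ) :
    ∫ ω, Y ω ^ n ∂μ = ∫ x, x ^ n ∂gaussianReal m v := by
  rw [← hY, integral_map (aemeasurable_of_map_eq_gaussianReal hY) (by fun_prop)]

end GaussianLaw

section Polarization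

variable {V : Type*} [AddCommGroup V] [Module ℝ V]

lemma map_mul_map_eq_sq_sub_sq (ℓ : V →ₗ[ℝ] ℝ) (u v : V) :
    ℓ u * ℓ v = (ℓ (u + v) ^ 2 - ℓ (u - v) ^ 2) / 4 := by
  rw [map_add, map_sub]
  ring

/-- Recovers a symmetric 4-linear form `Φ` from its diagonal `f x = Φ x x x x`: only the monomial
`s t r` of `(u + s v + t w + r z) ^ 4` survives the signed sum, with coefficient `4! · 8 = 192`. -/
noncomputable def quarticPolar (f : V → ℝ) (u v w z : V) : ℝ :=
  (∑ s ∈ ({1, -1} : Finset ℝ), ∑ t ∈ ({1, -1} : Finset ℝ), ∑ r ∈ ({1, -1} : Finset ℝ),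
    s * t * r * f (u + s • v + t • w + r • z)) / 192

lemma quarticPolar_eq (f : V → ℝ) (u v w z : V) :
    quarticPolar f u v w z = (f (u + v + w + z) - f (u + v + w - z) - f (u + v - w + z)
      + f (u + v - w - z) - f (u - v + w + z) + f (u - v + w - z) + f (u - v - w + z)
      - f (u - v - w - z)) / 192 := by
  simp only [quarticPolar, Finset.sum_pair (show (1 : ℝ) ≠ -1 by norm_num), one_smul, neg_smul,
    ← sub_eq_add_neg]
  ring

lemma quarticPolar_pow_four (ℓ : V →ₗ[ℝ] ℝ) (u v w z : V) :
    quarticPolar (fun x => ℓ x ^ 4) u v w z = ℓ u * ℓ v * ℓ w * ℓ z := by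
  simp only [quarticPolar_eq, map_add, map_sub]
  ring

lemma quarticPolar_sq (B : LinearMap.BilinForm ℝ V) (hB : B.IsSymm) (u v w z : V) :
    quarticPolar (fun x => 3 * B x x ^ 2) u v w z =
      B u v * B w z + B u w * B v z + B u z * B v w := by
  simp only [quarticPolar_eq, map_add, map_sub, LinearMap.add_apply, LinearMap.sub_apply,
    hB.eq v u, hB.eq w u, hB.eq z u, hB.eq w v, hB.eq z v, hB.eq z w]
  ring

variable {Ω : Type*} [MeasurableSpace Ω] {μ : Measure Ω}

lemma integrable_quarticPolar {F : V → Ω → ℝ} (hF : ∀ x, Integrable (F x) μ) (u v w z : V) :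
    Integrable (fun ω => quarticPolar (F · ω) u v w z) μ := by
  unfold quarticPolar
  fun_prop

lemma integral_quarticPolar {F : V → Ω → ℝ} (hF : ∀ x, Integrable (F x) μ) (u v w z : V) :
    ∫ ω, quarticPolar (F · ω) u v w z ∂μ = quarticPolar (fun x => ∫ ω, F x ω ∂μ) u v w z := by
  unfold quarticPolar
  rw [integral_div]
  congr 1
  rw [integral_finsetSum _ fun s _ => by fun_prop]
  refine Finset.sum_congr rfl fun s _ => ?_
  rw [integral_finsetSum _ fun t _ => by fun_prop]
  refine Finset.sum_congr rfl fun t _ => ?_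
  rw [integral_finsetSum _ fun r _ => by fun_prop]
  exact Finset.sum_congr rfl fun r _ => integral_const_mul _ _

end Polarization

section GaussianFunctional

variable {V : Type*} [AddCommGroup V] [Module ℝ V] {Ω : Type*} [MeasurableSpace Ω]

def IsCenteredGaussianFunctional (L : Ω → V →ₗ[ℝ] ℝ) (B : LinearMap.BilinForm ℝ V)
    (μ : Measure Ω) : Prop :=
  ∀ u, μ.map (fun ω => L ω u) = gaussianReal 0 (B u u).toNNReal

lemma centered_mul_centered_eq (a b c d p q : ℝ) :
    (a * b - p) * (c * d - q) = a * b * c * d - q * (a * b) - p * (c * d) + p * q := by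
  ring

namespace IsCenteredGaussianFunctional

variable {μ : Measure Ω} {L : Ω → V →ₗ[ℝ] ℝ} {B : LinearMap.BilinForm ℝ V}

lemma integrable_pow (hL : IsCenteredGaussianFunctional L B μ) (u : V) (n : ℕ) :
    Integrable (fun ω => L ω u ^ n) μ :=
  integrable_pow_of_map_eq_gaussianReal (hL u) n

lemma integral_sq (hL : IsCenteredGaussianFunctional L B μ) (hB : ∀ u, 0 ≤ B u u) (u : V) :
    ∫ ω, L ω u ^ 2 ∂μ = B u u := by
  rw [integral_pow_of_map_eq_gaussianReal (hL u), integral_sq_gaussianReal,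
    Real.coe_toNNReal _ (hB u)]

lemma integral_pow_four (hL : IsCenteredGaussianFunctional L B μ) (hB : ∀ u, 0 ≤ B u u)
    (u : V) : ∫ ω, L ω u ^ 4 ∂μ = 3 * B u u ^ 2 := by
  rw [integral_pow_of_map_eq_gaussianReal (hL u), integral_pow_four_gaussianReal,
    Real.coe_toNNReal _ (hB u)]

lemma integrable_mul (hL : IsCenteredGaussianFunctional L B μ) (u v : V) :
    Integrable (fun ω => L ω u * L ω v) μ := by
  simp_rw [map_mul_map_eq_sq_sub_sq]
  exact ((hL.integrable_pow _ 2).sub (hL.integrable_pow _ 2)).div_const 4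

lemma integral_mul (hL : IsCenteredGaussianFunctional L B μ) (hB : ∀ u, 0 ≤ B u u)
    (hBs : B.IsSymm) (u v : V) : ∫ ω, L ω u * L ω v ∂μ = B u v := by
  simp_rw [map_mul_map_eq_sq_sub_sq]
  rw [integral_div, integral_sub (hL.integrable_pow _ 2) (hL.integrable_pow _ 2),
    hL.integral_sq hB, hL.integral_sq hB]
  simp only [map_add, map_sub, LinearMap.add_apply, LinearMap.sub_apply, hBs.eq v u]
  ring

lemma integrable_mul_four (hL : IsCenteredGaussianFunctional L B μ) (u v w z : V) :
    Integrable (fun ω => L ω u * L ω v * L ω w * L ω z) μ := by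
  simp_rw [← quarticPolar_pow_four]
  exact integrable_quarticPolar (fun x => hL.integrable_pow x 4) u v w z

/-- Isserlis' theorem for fourth moments. -/
lemma integral_mul_four (hL : IsCenteredGaussianFunctional L B μ) (hB : ∀ u, 0 ≤ B u u)
    (hBs : B.IsSymm) (u v w z : V) :
    ∫ ω, L ω u * L ω v * L ω w * L ω z ∂μ = B u v * B w z + B u w * B v z + B u z * B v w := by
  simp_rw [← quarticPolar_pow_four]
  rw [integral_quarticPolar (fun x => hL.integrable_pow x 4), ← quarticPolar_sq B hBs]
  simp_rw [hL.integral_pow_four hB]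

lemma integrable_centered_mul (hL : IsCenteredGaussianFunctional L B μ) [IsFiniteMeasure μ]
    (u v w z : V) :
    Integrable (fun ω => (L ω u * L ω v - B u v) * (L ω w * L ω z - B w z)) μ := by
  simp_rw [centered_mul_centered_eq]
  exact (((hL.integrable_mul_four u v w z).sub ((hL.integrable_mul u v).const_mul _)).sub
    ((hL.integrable_mul w z).const_mul _)).add (integrable_const _)

lemma integral_centered_mul (hL : IsCenteredGaussianFunctional L B μ) [IsProbabilityMeasure μ]
    (hB : ∀ u, 0 ≤ B u u) (hBs : B.IsSymm) (u v w z : V) :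
    ∫ ω, (L ω u * L ω v - B u v) * (L ω w * L ω z - B w z) ∂μ =
      B u w * B v z + B u z * B v w := by
  have h4 := hL.integrable_mul_four u v w z
  have huv := (hL.integrable_mul u v).const_mul (B w z)
  have hwz := (hL.integrable_mul w z).const_mul (B u v)
  simp_rw [centered_mul_centered_eq]
  rw [integral_add (by fun_prop) (by fun_prop), integral_sub (by fun_prop) hwz,
    integral_sub h4 huv, integral_const_mul, integral_const_mul, integral_const,
    hL.integral_mul_four hB hBs, hL.integral_mul hB hBs, hL.integral_mul hB hBs]
  simp only [probReal_univ, one_smul]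
  ring

end IsCenteredGaussianFunctional

end GaussianFunctional

section RandomVector

variable {ι : Type*} [Fintype ι] [DecidableEq ι] {Ω : Type*} [MeasurableSpace Ω]
  {μ : Measure Ω} {X : Ω → ι → ℝ} {P : Matrix ι ι ℝ}

lemma isCenteredGaussianFunctional_dotProduct
    (hX : ∀ u : ι → ℝ, μ.map (fun ω => ∑ i, u i * X ω i) =
      gaussianReal 0 (Real.toNNReal (∑ i, ∑ j, u i * P i j * u j))) :
    IsCenteredGaussianFunctional (fun ω => (dotProductBilin ℝ ℝ).flip (X ω)) P.toBilin' μ :=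
  fun u => by simpa [toBilin'_apply, dotProduct] using hX u

lemma aemeasurable_of_isCenteredGaussianFunctional_dotProduct
    {B : LinearMap.BilinForm ℝ (ι → ℝ)}
    (hX : IsCenteredGaussianFunctional (fun ω => (dotProductBilin ℝ ℝ).flip (X ω)) B μ) :
    AEMeasurable X μ :=
  aemeasurable_pi_lambda _ fun i => by
    simpa using aemeasurable_of_map_eq_gaussianReal (hX (Pi.single i 1))

lemma integrable_centered_coord_mul [IsFiniteMeasure μ]
    (hX : IsCenteredGaussianFunctional (fun ω => (dotProductBilin ℝ ℝ).flip (X ω)) P.toBilin' μ)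
    (i k l m : ι) :
    Integrable (fun ω => (X ω i * X ω k - P i k) * (X ω l * X ω m - P l m)) μ := by
  simpa using hX.integrable_centered_mul (Pi.single i 1) (Pi.single k 1) (Pi.single l 1)
    (Pi.single m 1)

lemma integral_centered_coord_mul [IsProbabilityMeasure μ]
    (hX : IsCenteredGaussianFunctional (fun ω => (dotProductBilin ℝ ℝ).flip (X ω)) P.toBilin' μ)
    (hP : P.PosSemidef) (i k l m : ι) :
    ∫ ω, (X ω i * X ω k - P i k) * (X ω l * X ω m - P l m) ∂μ =
      P i l * P k m + P i m * P k l := by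
  have hB : ∀ u, 0 ≤ P.toBilin' u u := fun u => by
    simpa [toBilin'_apply'] using hP.dotProduct_mulVec_nonneg u
  have hBs : P.toBilin'.IsSymm := isSymm_toBilin'_iff_isSymm.mpr (isHermitian_iff_isSymm.mp hP.1)
  simpa using hX.integral_centered_mul hB hBs (Pi.single i 1) (Pi.single k 1) (Pi.single l 1)
    (Pi.single m 1)

end RandomVector

section Contraction

variable {ι : Type*} [Fintype ι]

lemma Matrix.mul_mul_mul_apply_eq_sum (A B : Matrix ι ι ℝ) (i j : ι) :
    (A * B * A * B) i j = ∑ m, ∑ l, ∑ k, (A i k * A l m) * (B k l * B m j) := by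
  simp only [mul_apply, Finset.sum_mul]
  exact Finset.sum_congr rfl fun m _ => Finset.sum_congr rfl fun l _ =>
    Finset.sum_congr rfl fun k _ => by ring

lemma Matrix.sum_crossing_contraction [DecidableEq ι] {P : Matrix ι ι ℝ} (hP : P.IsSymm)
    (i j : ι) :
    ∑ m, ∑ l, ∑ k, (P i l * P k m + P i m * P k l) * (P k m * P l j + P k j * P l m) =
      3 * (P ^ 4) i j + (P ^ 2).trace * (P ^ 2) i j := by
  have hs : ∀ a b, P a b = P b a := fun a b => (hP.apply a b).symm
  have hloop : ∑ m, ∑ l, ∑ k, P i l * P k m * (P k m * P l j) =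
      (P ^ 2).trace * (P ^ 2) i j := by
    simp only [sq, trace, diag, mul_apply, Finset.sum_mul, Finset.mul_sum]
    rw [Finset.sum_comm]
    refine Finset.sum_congr rfl fun l _ => Finset.sum_congr rfl fun m _ =>
      Finset.sum_congr rfl fun k _ => ?_
    rw [hs k m]; ring
  have hchain₁ : ∑ m, ∑ l, ∑ k, P i m * P k l * (P k m * P l j) = (P * (P * P * P)) i j := by
    simp only [mul_apply, Finset.sum_mul, Finset.mul_sum]
    refine Finset.sum_congr rfl fun m _ => Finset.sum_congr rfl fun l _ =>
      Finset.sum_congr rfl fun k _ => ?_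
    rw [hs k m]; ring
  have hchain₂ : ∑ m, ∑ l, ∑ k, P i l * P k m * (P k j * P l m) = (P * P * (P * P)) i j := by
    simp only [mul_apply, Finset.sum_mul, Finset.mul_sum]
    refine Finset.sum_congr rfl fun m _ => ?_
    rw [Finset.sum_comm]
    refine Finset.sum_congr rfl fun k _ => Finset.sum_congr rfl fun l _ => ?_
    rw [hs k m]; ring
  have hchain₃ : ∑ m, ∑ l, ∑ k, P i m * P k l * (P k j * P l m) = (P * (P * (P * P))) i j := by
    simp only [mul_apply, Finset.mul_sum]
    refine Finset.sum_congr rfl fun m _ => Finset.sum_congr rfl fun l _ =>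
      Finset.sum_congr rfl fun k _ => ?_
    rw [hs k l, hs l m]; ring
  simp only [mul_add, add_mul, Finset.sum_add_distrib, hloop, hchain₁, hchain₂, hchain₃]
  simp only [pow_succ, pow_zero, one_mul, mul_assoc]
  ring

end Contraction

section IndependentPair

variable {ι : Type*} [Fintype ι] [DecidableEq ι] {Ω : Type*} [MeasurableSpace Ω]
  {μ : Measure Ω} [IsProbabilityMeasure μ] {X₁ X₂ : Ω → ι → ℝ} {P : Matrix ι ι ℝ}

lemma integral_crossing_apply (hindep : IndepFun X₁ X₂ μ)
    (hX₁ : IsCenteredGaussianFunctional (fun ω => (dotProductBilin ℝ ℝ).flip (X₁ ω)) P.toBilin' μ)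
    (hX₂ : IsCenteredGaussianFunctional (fun ω => (dotProductBilin ℝ ℝ).flip (X₂ ω)) P.toBilin' μ)
    (hP : P.PosSemidef) (i j : ι) :
    ∫ ω, ((vecMulVec (X₁ ω) (X₁ ω) - P) * (vecMulVec (X₂ ω) (X₂ ω) - P) *
        (vecMulVec (X₁ ω) (X₁ ω) - P) * (vecMulVec (X₂ ω) (X₂ ω) - P)) i j ∂μ =
      ∑ m, ∑ l, ∑ k, (P i l * P k m + P i m * P k l) * (P k m * P l j + P k j * P l m) := by
  let f : ι → ι → ι → ι → (ι → ℝ) → ℝ := fun a b c d x =>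
    (x a * x b - P a b) * (x c * x d - P c d)
  have hf : ∀ a b c d, Measurable (f a b c d) := fun a b c d => by fun_prop
  have hterm : ∀ k l m, Integrable (fun ω => f i k l m (X₁ ω) * f k l m j (X₂ ω)) μ ∧
      ∫ ω, f i k l m (X₁ ω) * f k l m j (X₂ ω) ∂μ =
        (P i l * P k m + P i m * P k l) * (P k m * P l j + P k j * P l m) := fun k l m =>
    ⟨(hindep.comp (hf i k l m) (hf k l m j)).integrable_mul
        (integrable_centered_coord_mul hX₁ i k l m) (integrable_centered_coord_mul hX₂ k l m j),
      by rw [hindep.integral_fun_comp_mul_comp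
          (aemeasurable_of_isCenteredGaussianFunctional_dotProduct hX₁)
          (aemeasurable_of_isCenteredGaussianFunctional_dotProduct hX₂)
          (hf i k l m).aestronglyMeasurable (hf k l m j).aestronglyMeasurable,
        integral_centered_coord_mul hX₁ hP, integral_centered_coord_mul hX₂ hP]⟩
  simp_rw [mul_mul_mul_apply_eq_sum, Matrix.sub_apply, vecMulVec_apply]
  rw [integral_finsetSum _ fun m _ => integrable_finsetSum _ fun l _ =>
    integrable_finsetSum _ fun k _ => (hterm k l m).1]
  refine Finset.sum_congr rfl fun m _ => ?_
  rw [integral_finsetSum _ fun l _ => integrable_finsetSum _ fun k _ => (hterm k l m).1]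
  refine Finset.sum_congr rfl fun l _ => ?_
  rw [integral_finsetSum _ fun k _ => (hterm k l m).1]
  exact Finset.sum_congr rfl fun k _ => (hterm k l m).2

end IndependentPair

theorem crossing_pair_partition_moment_general {r : ℕ} {Ω : Type*} [MeasurableSpace Ω]
    (μ : Measure Ω) [IsProbabilityMeasure μ]
    (X₁ X₂ : Ω → (Fin r → ℝ))
    (hindep : IndepFun X₁ X₂ μ)
    (P : Matrix (Fin r) (Fin r) ℝ) (hP : P.PosSemidef)
    (hX₁ : ∀ u : Fin r → ℝ,
      Measure.map (fun ω => ∑ i, u i * X₁ ω i) μ =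
        gaussianReal 0 (Real.toNNReal (∑ i, ∑ j, u i * P i j * u j)))
    (hX₂ : ∀ u : Fin r → ℝ,
      Measure.map (fun ω => ∑ i, u i * X₂ ω i) μ =
        gaussianReal 0 (Real.toNNReal (∑ i, ∑ j, u i * P i j * u j))) :
    (Matrix.of fun i j =>
        ∫ ω, ((vecMulVec (X₁ ω) (X₁ ω) - P) * (vecMulVec (X₂ ω) (X₂ ω) - P) *
            (vecMulVec (X₁ ω) (X₁ ω) - P) * (vecMulVec (X₂ ω) (X₂ ω) - P)) i j ∂μ) =
      (3 : ℝ) • P ^ 4 + (P ^ 2).trace • P ^ 2 := by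
  ext i j
  rw [of_apply, integral_crossing_apply hindep (isCenteredGaussianFunctional_dotProduct hX₁)
    (isCenteredGaussianFunctional_dotProduct hX₂) hP,
    sum_crossing_contraction (isHermitian_iff_isSymm.mp hP.1), Matrix.add_apply,
    Matrix.smul_apply, Matrix.smul_apply, smul_eq_mul, smul_eq_mul]

theorem crossing_pair_partition_moment {r : ℕ} {Ω : Type*} [MeasurableSpace Ω]
    (μ : Measure Ω) [IsProbabilityMeasure μ]
    (X₁ X₂ : Ω → (Fin r → ℝ)) (hX₁m : Measurable X₁) (hX₂m : Measurable X₂)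
    (hindep : IndepFun X₁ X₂ μ)
    (P : Matrix (Fin r) (Fin r) ℝ) (hP : P.PosSemidef)
    (hX₁ : ∀ u : Fin r → ℝ,
      Measure.map (fun ω => ∑ i, u i * X₁ ω i) μ =
        gaussianReal 0 (Real.toNNReal (∑ i, ∑ j, u i * P i j * u j)))
    (hX₂ : ∀ u : Fin r → ℝ,
      Measure.map (fun ω => ∑ i, u i * X₂ ω i) μ =
        gaussianReal 0 (Real.toNNReal (∑ i, ∑ j, u i * P i j * u j))) :
    (Matrix.of fun i j =>
        ∫ ω, ((vecMulVec (X₁ ω) (X₁ ω) - P) * (vecMulVec (X₂ ω) (X₂ ω) - P) *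
            (vecMulVec (X₁ ω) (X₁ ω) - P) * (vecMulVec (X₂ ω) (X₂ ω) - P)) i j ∂μ) =
      (3 : ℝ) • P ^ 4 + (P ^ 2).trace • P ^ 2 :=
  crossing_pair_partition_moment_general μ X₁ X₂ hindep P hP hX₁ hX₂
end

section
/- Let A = (xy' + yx')/2 with x, y ∈ ℝ^r, let P be a symmetric positive semidefinite r×r matrix, and let B = ⟨x,Px⟩yy' + ⟨y,Py⟩xx'. Write u = ⟨x,Py⟩ and v = ⟨x,Px⟩⟨y,Py⟩, and define p_n, q_n by p₁ = 1, q₁ = 0 and the recursion [p_{n+1}; q_{n+1}] = M [p_n; q_n] with M = [[u/2, v],[1/4, u/2]]. Then (AP)^n = p_n·AP + q_n·BP for all n ≥ 1. -/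
open Matrix

private lemma vmv_mul {r : ℕ} (a b : Fin r → ℝ) (M : Matrix (Fin r) (Fin r) ℝ) :
    vecMulVec a b * M = vecMulVec a (b ᵥ* M) := by
  ext i j
  simp [Matrix.mul_apply, vecMulVec_apply, Matrix.vecMul, dotProduct,
    Finset.mul_sum, mul_assoc]

private lemma vmv_mul_vmv {r : ℕ} (a b c d : Fin r → ℝ) :
    vecMulVec a b * vecMulVec c d = (b ⬝ᵥ c) • vecMulVec a d := by
  ext i j
  simp only [Matrix.mul_apply, vecMulVec_apply, Matrix.smul_apply, dotProduct,
    Finset.sum_mul, smul_eq_mul]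
  apply Finset.sum_congr rfl
  intro k _
  ring

theorem rank_two_power_recursion {r : ℕ} (x y : Fin r → ℝ)
    (P : Matrix (Fin r) (Fin r) ℝ) (hP : P.PosSemidef)
    (A B : Matrix (Fin r) (Fin r) ℝ)
    (hA : A = (1 / 2 : ℝ) • (vecMulVec x y + vecMulVec y x))
    (hB : B = (x ⬝ᵥ (P *ᵥ x)) • vecMulVec y y + (y ⬝ᵥ (P *ᵥ y)) • vecMulVec x x)
    (u v : ℝ) (hu : u = x ⬝ᵥ (P *ᵥ y)) (hv : v = (x ⬝ᵥ (P *ᵥ x)) * (y ⬝ᵥ (P *ᵥ y)))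
    (p q : ℕ → ℝ) (hp1 : p 1 = 1) (hq1 : q 1 = 0)
    (hrec : ∀ n : ℕ, 1 ≤ n →
      p (n + 1) = u / 2 * p n + v * q n ∧ q (n + 1) = 1 / 4 * p n + u / 2 * q n) :
    ∀ n : ℕ, 1 ≤ n → (A * P) ^ n = p n • (A * P) + q n • (B * P) := by
  have hPsym : Pᵀ = P := hP.1.eq
  have hvm : ∀ z : Fin r → ℝ, z ᵥ* P = P *ᵥ z := by
    intro z
    rw [← hPsym, Matrix.vecMul_transpose, hPsym]
  have hsym : y ⬝ᵥ (P *ᵥ x) = x ⬝ᵥ (P *ᵥ y) := by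
    rw [Matrix.dotProduct_mulVec, hvm, dotProduct_comm]
  set c := x ⬝ᵥ (P *ᵥ x) with hc
  set d := y ⬝ᵥ (P *ᵥ y) with hd
  have hAP : A * P = (1 / 2 : ℝ) •
      (vecMulVec x (P *ᵥ y) + vecMulVec y (P *ᵥ x)) := by
    rw [hA, Matrix.smul_mul, Matrix.add_mul, vmv_mul, vmv_mul, hvm, hvm]
  have hBP : B * P = c • vecMulVec y (P *ᵥ y) + d • vecMulVec x (P *ᵥ x) := by
    rw [hB, Matrix.add_mul, Matrix.smul_mul, Matrix.smul_mul, vmv_mul, vmv_mul, hvm, hvm]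
  have hdp : ∀ z w : Fin r → ℝ, (P *ᵥ z) ⬝ᵥ w = w ⬝ᵥ (P *ᵥ z) := fun z w =>
    dotProduct_comm _ _
  have key1 : (A * P) * (A * P) = (u / 2) • (A * P) + (1 / 4 : ℝ) • (B * P) := by
    rw [hAP, hBP, Matrix.smul_mul, Matrix.mul_smul, Matrix.add_mul, Matrix.mul_add,
      Matrix.mul_add, vmv_mul_vmv, vmv_mul_vmv, vmv_mul_vmv, vmv_mul_vmv,
      hdp, hdp, hdp, hdp, hsym, ← hc, ← hd, ← hu]
    ext i j
    simp [vecMulVec_apply]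
    ring
  have key2 : (B * P) * (A * P) = v • (A * P) + (u / 2) • (B * P) := by
    rw [hAP, hBP, Matrix.mul_smul, Matrix.add_mul, Matrix.smul_mul, Matrix.smul_mul,
      Matrix.mul_add, Matrix.mul_add, vmv_mul_vmv, vmv_mul_vmv, vmv_mul_vmv, vmv_mul_vmv,
      hdp, hdp, hdp, hdp, hsym, ← hc, ← hd, ← hu, hv]
    ext i j
    simp [vecMulVec_apply]
    ring
  intro n hn
  induction n with
  | zero => omega
  | succ m ih =>
    rcases Nat.eq_or_lt_of_le hn with h1 | h1
    · simp [← h1, hp1, hq1]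
    · have hm : 1 ≤ m := by omega
      obtain ⟨hpm, hqm⟩ := hrec m hm
      rw [pow_succ, ih hm, Matrix.add_mul, Matrix.smul_mul, Matrix.smul_mul,
        key1, key2, hpm, hqm]
      ext i j
      simp
      ring
end
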